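/- arXiv:2003.09198 — 6 statements merged into one kernel-verified Lean document; each statement's English description precedes it below -/
import Mathlib

section
/- Let G be a finite undirected graph with degree matrix D and adjacency matrix A, and fix a real number r > 1 and an integer p with 2 ≤ p ≤ n. If the p-th smallest eigenvalue s of the symmetric matrix D - r·A is strictly negative, then 1/r is the p-th largest eigenvalue of the regularized random-walk Laplacian L = (D + (-s)·I)⁻¹ A, and any eigenvector of D - r·A for eigenvalue s is an eigenvector of L for eigenvalue 1/r. -/
open Matrix

/-- Ascending list of eigenvalues (with multiplicity) of a Hermitian real matrix:
`sortEig hM i` is the `(i+1)`-th smallest eigenvalue of `M`. -/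
noncomputable def sortEig {n : ℕ} {M : Matrix (Fin n) (Fin n) ℝ} (hM : M.IsHermitian) :
    Fin n → ℝ :=
  fun i => hM.eigenvalues (Tuple.sort hM.eigenvalues i)

/-- The `(p+1)`-th largest root (0-based `p`) of the characteristic polynomial of `M`. -/
noncomputable def kthLargestRoot {n : ℕ} (M : Matrix (Fin n) (Fin n) ℝ) (p : ℕ) : ℝ :=
  (M.charpoly.roots.sort (· ≤ ·)).getD (n - 1 - p) 0

/-! Put `τ = -s > 0` and `D_τ = D + τ I`, a positive diagonal matrix because degrees are
nonnegative. `L = D_τ⁻¹ A` has the same characteristic polynomial as the symmetric matrix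
`S = D_τ^{-1/2} A D_τ^{-1/2}`, so its roots are the `n` real eigenvalues of `S`. Moreover
`(D - r A) - s I = D_τ - r A = r D_τ^{1/2} (r⁻¹ I - S) D_τ^{1/2}`, so by Sylvester's law of inertia
`D - r A` has as many eigenvalues below (above) `s` as `S` has above (below) `1/r`. As `s` is the
`p`-th smallest eigenvalue of `D - r A`, this puts `1/r` in the `p`-th largest position of the
spectrum of `S`. Finally `(D - r A) x = s x` says exactly `D_τ x = r A x`. -/

open Finset QuadraticMap

namespace Tuple
variable {n : ℕ} {α : Type*} [LinearOrder α]

lemma card_filter_apply_sort (f : Fin n → α) (P : α → Prop) [DecidablePred P] :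
    #{i | P (f (sort f i))} = #{i | P (f i)} :=
  card_equiv (sort f) (by simp)

lemma apply_sort_eq_iff (f : Fin n → α) (j : Fin n) (a : α) :
    f (sort f j) = a ↔ #{i | f i < a} ≤ j ∧ j + #{i | a < f i} < n := by
  have hle := lt_card_le_iff_apply_le_of_monotone (j := j) (a := a) (monotone_sort f)
  have hlt := lt_card_lt_iff_apply_lt_of_monotone (j := j) (a := a) (monotone_sort f)
  have hcompl : #{i | f i ≤ a} + #{i | a < f i} = n := by
    simpa [not_le] using card_filter_add_card_filter_not (s := univ) (p := fun i => f i ≤ a)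
  simp only [Function.comp_apply, card_filter_apply_sort f (· ≤ a),
    card_filter_apply_sort f (· < a)] at hle hlt
  rw [le_antisymm_iff, ← hle, ← not_lt, ← hlt]
  omega

end Tuple

lemma Multiset.getD_sort_map_univ {n : ℕ} {α : Type*} [LinearOrder α] (f : Fin n → α)
    (j : Fin n) (a : α) :
    ((Multiset.map f univ.val).sort (· ≤ ·)).getD j a = f (Tuple.sort f j) := by
  have hsort : (Multiset.map f univ.val).sort (· ≤ ·) = List.ofFn (f ∘ Tuple.sort f) := by
    refine List.Perm.eq_of_sortedLE (Multiset.pairwise_sort _ _).sortedLE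
      (List.sortedLE_ofFn_iff.2 (Tuple.monotone_sort f)) ?_
    rw [← Multiset.coe_eq_coe, Multiset.sort_eq, ← Fin.univ_val_map, ← Multiset.map_map,
      Multiset.map_univ_val_equiv]
  rw [hsort, List.getD_eq_getElem _ _ (by simp), List.getElem_ofFn]
  rfl

namespace Matrix

section QuadraticForm
variable {n R : Type*} [Fintype n] [DecidableEq n] [CommRing R]

lemma toQuadraticForm'_apply (M : Matrix n n R) (x : n → R) :
    M.toQuadraticForm' x = x ⬝ᵥ M *ᵥ x :=
  toLinearMap₂'_apply' M x x

lemma toQuadraticForm'_neg (M : Matrix n n R) : (-M).toQuadraticForm' = -M.toQuadraticForm' := by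
  ext x
  simp [toQuadraticForm'_apply, neg_mulVec]

lemma toQuadraticForm'_diagonal (w : n → R) :
    (diagonal w).toQuadraticForm' = weightedSumSquares R w := by
  ext x
  simp [toQuadraticForm'_apply, dotProduct, mulVec_diagonal, mul_left_comm]

lemma equivalent_toQuadraticForm'_mul_mul_transpose {P : Matrix n n R} (hP : IsUnit P.det)
    (M : Matrix n n R) :
    (P * M * Pᵀ).toQuadraticForm'.Equivalent M.toQuadraticForm' :=
  ⟨{ toLinearEquiv := Pᵀ.toLinearEquiv' (Pᵀ.invertibleOfIsUnitDet (isUnit_det_transpose _ hP))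
     map_app' := fun x => by
       simp [toQuadraticForm'_apply, ← mulVec_mulVec, dotProduct_mulVec x P, mulVec_transpose] }⟩

end QuadraticForm

namespace IsHermitian
variable {n : Type*} [Fintype n] [DecidableEq n] {X Y : Matrix n n ℝ}

lemma sub_smul_one_eq_mul_diagonal_mul_transpose (hX : X.IsHermitian) (c : ℝ) :
    X - c • 1 = (hX.eigenvectorUnitary : Matrix n n ℝ) *
      diagonal (fun i => hX.eigenvalues i - c) * (hX.eigenvectorUnitary : Matrix n n ℝ)ᵀ := by
  have hU : (hX.eigenvectorUnitary : Matrix n n ℝ) * (hX.eigenvectorUnitary : Matrix n n ℝ)ᵀ = 1 :=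
    mem_unitaryGroup_iff.1 hX.eigenvectorUnitary.2
  have hdiag : diagonal (fun i => hX.eigenvalues i - c) = diagonal hX.eigenvalues - c • 1 := by
    rw [smul_one_eq_diagonal, diagonal_sub]
  conv_lhs => rw [hX.spectral_theorem, Unitary.conjStarAlgAut_apply]
  rw [hdiag, mul_sub, sub_mul, Matrix.mul_smul, Matrix.smul_mul, mul_one, hU,
    star_eq_conjTranspose, conjTranspose_eq_transpose_of_trivial]
  simp

lemma equivalent_toQuadraticForm'_sub_smul_one (hX : X.IsHermitian) (c : ℝ) :
    (X - c • 1).toQuadraticForm'.Equivalent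
      (weightedSumSquares ℝ fun i => hX.eigenvalues i - c) := by
  rw [hX.sub_smul_one_eq_mul_diagonal_mul_transpose c, ← toQuadraticForm'_diagonal]
  exact equivalent_toQuadraticForm'_mul_mul_transpose (UnitaryGroup.det_isUnit _) _

lemma sigNeg_toQuadraticForm'_sub_smul_one (hX : X.IsHermitian) (c : ℝ) :
    sigNeg (X - c • 1).toQuadraticForm' = #{i | hX.eigenvalues i < c} := by
  rw [QuadraticForm.sigNeg_of_equiv_weightedSumSquares
    (hX.equivalent_toQuadraticForm'_sub_smul_one c), Set.ncard_eq_toFinset_card']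
  simp

lemma sigPos_toQuadraticForm'_sub_smul_one (hX : X.IsHermitian) (c : ℝ) :
    sigPos (X - c • 1).toQuadraticForm' = #{i | c < hX.eigenvalues i} := by
  rw [QuadraticForm.sigPos_of_equiv_weightedSumSquares
    (hX.equivalent_toQuadraticForm'_sub_smul_one c), Set.ncard_eq_toFinset_card']
  simp

lemma card_eigenvalues_lt_eq_of_congr (hX : X.IsHermitian) (hY : Y.IsHermitian)
    {P : Matrix n n ℝ} (hP : IsUnit P.det) {c c' : ℝ} (h : X - c • 1 = P * (c' • 1 - Y) * Pᵀ) :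
    #{i | hX.eigenvalues i < c} = #{i | c' < hY.eigenvalues i} ∧
      #{i | c < hX.eigenvalues i} = #{i | hY.eigenvalues i < c'} := by
  have he : (X - c • 1).toQuadraticForm'.Equivalent (-(Y - c' • 1).toQuadraticForm') := by
    rw [h, ← toQuadraticForm'_neg, neg_sub]
    exact equivalent_toQuadraticForm'_mul_mul_transpose hP _
  rw [← hX.sigNeg_toQuadraticForm'_sub_smul_one, ← hY.sigPos_toQuadraticForm'_sub_smul_one,
    ← hX.sigPos_toQuadraticForm'_sub_smul_one, ← hY.sigNeg_toQuadraticForm'_sub_smul_one,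
    he.sigNeg_eq, he.sigPos_eq, sigNeg_neg, sigPos_neg]
  exact ⟨rfl, rfl⟩

end IsHermitian

section PositiveDiagonal
variable {n : Type*} [Fintype n] [DecidableEq n] {d : n → ℝ}

lemma inv_diagonal_of_pos (hd : ∀ i, 0 < d i) :
    (diagonal d)⁻¹ = diagonal (fun i => (√(d i))⁻¹) * diagonal (fun i => (√(d i))⁻¹) := by
  refine inv_eq_left_inv ?_
  rw [diagonal_mul_diagonal, diagonal_mul_diagonal, ← diagonal_one]
  refine congrArg diagonal (funext fun i => ?_)
  rw [← mul_inv, Real.mul_self_sqrt (hd i).le, inv_mul_cancel₀ (hd i).ne']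

lemma charpoly_inv_diagonal_mul (hd : ∀ i, 0 < d i) (A : Matrix n n ℝ) :
    ((diagonal d)⁻¹ * A).charpoly =
      (diagonal (fun i => (√(d i))⁻¹) * A * diagonal (fun i => (√(d i))⁻¹)).charpoly := by
  rw [inv_diagonal_of_pos hd, Matrix.mul_assoc, charpoly_mul_comm, Matrix.mul_assoc]

lemma isHermitian_diagonal_mul_mul_diagonal {A : Matrix n n ℝ} (hA : Aᵀ = A) (w : n → ℝ) :
    (diagonal w * A * diagonal w).IsHermitian := by
  simp [isHermitian_iff_isSymm, IsSymm, transpose_mul, hA, Matrix.mul_assoc]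

lemma diagonal_sub_smul_eq_mul_mul_transpose (hd : ∀ i, 0 < d i) (A : Matrix n n ℝ) {r : ℝ}
    (hr : 0 < r) :
    diagonal d - r • A = (√r • diagonal fun i => √(d i)) *
      (r⁻¹ • 1 - diagonal (fun i => (√(d i))⁻¹) * A * diagonal (fun i => (√(d i))⁻¹)) *
      (√r • diagonal fun i => √(d i))ᵀ := by
  have hsqrt i : √(d i) ≠ 0 := (Real.sqrt_pos.2 (hd i)).ne'
  have hEF : diagonal (fun i => √(d i)) * diagonal (fun i => (√(d i))⁻¹) = 1 := by
    rw [diagonal_mul_diagonal, ← diagonal_one]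
    exact congrArg diagonal (funext fun i => mul_inv_cancel₀ (hsqrt i))
  have hFE : diagonal (fun i => (√(d i))⁻¹) * diagonal (fun i => √(d i)) = 1 := by
    rw [diagonal_mul_diagonal, ← diagonal_one]
    exact congrArg diagonal (funext fun i => inv_mul_cancel₀ (hsqrt i))
  have hEE : diagonal (fun i => √(d i)) * diagonal (fun i => √(d i)) = diagonal d := by
    rw [diagonal_mul_diagonal]
    simp_rw [Real.mul_self_sqrt (hd _).le]
  have hconj : (diagonal fun i => √(d i)) *
      (r⁻¹ • 1 - diagonal (fun i => (√(d i))⁻¹) * A * diagonal (fun i => (√(d i))⁻¹)) *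
      (diagonal fun i => √(d i)) = r⁻¹ • diagonal d - A := by
    simp only [mul_sub, sub_mul, Matrix.mul_smul, Matrix.smul_mul, Matrix.mul_one, hEE,
      ← Matrix.mul_assoc, hEF, Matrix.one_mul]
    rw [Matrix.mul_assoc, hFE, Matrix.mul_one]
  rw [transpose_smul, diagonal_transpose, Matrix.smul_mul, Matrix.mul_smul, Matrix.smul_mul,
    hconj, smul_smul, Real.mul_self_sqrt hr.le, smul_sub, smul_smul, mul_inv_cancel₀ hr.ne',
    one_smul]

lemma IsHermitian.card_eigenvalues_lt_eq_of_sub_smul_one_eq (hd : ∀ i, 0 < d i)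
    {X A : Matrix n n ℝ} {r c : ℝ} (hr : 0 < r) (hX : X.IsHermitian)
    (hS : (diagonal (fun i => (√(d i))⁻¹) * A * diagonal (fun i => (√(d i))⁻¹)).IsHermitian)
    (hXd : X - c • 1 = diagonal d - r • A) :
    #{i | hX.eigenvalues i < c} = #{i | r⁻¹ < hS.eigenvalues i} ∧
      #{i | c < hX.eigenvalues i} = #{i | hS.eigenvalues i < r⁻¹} := by
  refine hX.card_eigenvalues_lt_eq_of_congr hS ?_
    (hXd.trans (diagonal_sub_smul_eq_mul_mul_transpose hd A hr))
  rw [det_smul, det_diagonal, isUnit_iff_ne_zero]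
  exact mul_ne_zero (pow_ne_zero _ (Real.sqrt_pos.2 hr).ne')
    (prod_ne_zero_iff.2 fun i _ => (Real.sqrt_pos.2 (hd i)).ne')

end PositiveDiagonal

lemma inv_add_smul_one_mul_mulVec_eq {n K : Type*} [Fintype n] [DecidableEq n] [Field K]
    {D A : Matrix n n K} {r s : K} (hB : IsUnit (D + (-s) • 1).det) (hr : r ≠ 0) {x : n → K}
    (hx : (D - r • A) *ᵥ x = s • x) :
    ((D + (-s) • 1)⁻¹ * A) *ᵥ x = r⁻¹ • x := by
  have hBx : (D + (-s) • 1) *ᵥ x = r • A *ᵥ x := by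
    rw [sub_mulVec, smul_mulVec] at hx
    rw [add_mulVec, smul_mulVec, one_mulVec, neg_smul, ← hx]
    module
  rw [← mulVec_mulVec, ← inv_smul_smul₀ hr (A *ᵥ x), ← hBx, mulVec_smul, mulVec_mulVec,
    nonsing_inv_mul _ hB, one_mulVec]

end Matrix

/-- if the `p`-th smallest eigenvalue `s` of `D - r•A` is negative,
then `1/r` is the `p`-th largest eigenvalue of `L = (D + (-s)I)⁻¹ A` (whose `n`
eigenvalues are all real), and eigenvectors of `D - r•A` for `s` are eigenvectors
of `L` for `1/r`. -/
theorem stmt0 {n : ℕ} (A D : Matrix (Fin n) (Fin n) ℝ)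
    (hAsymm : Aᵀ = A) (hA01 : ∀ i j, A i j = 0 ∨ A i j = 1)
    (hD : D = Matrix.diagonal fun i => ∑ j, A i j)
    (r : ℝ) (hr : 1 < r) (p : ℕ) (hp2 : 2 ≤ p) (hpn : p ≤ n)
    (hH : (D - r • A).IsHermitian)
    (hneg : sortEig hH ⟨p - 1, by omega⟩ < 0) :
    (((D + (-(sortEig hH ⟨p - 1, by omega⟩)) • 1)⁻¹ * A).charpoly.roots.card = n) ∧
    kthLargestRoot ((D + (-(sortEig hH ⟨p - 1, by omega⟩)) • 1)⁻¹ * A) (p - 1) = 1 / r ∧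
    ∀ x : Fin n → ℝ, (D - r • A) *ᵥ x = sortEig hH ⟨p - 1, by omega⟩ • x →
      ((D + (-(sortEig hH ⟨p - 1, by omega⟩)) • 1)⁻¹ * A) *ᵥ x = (1 / r) • x := by
  set s := sortEig hH ⟨p - 1, by omega⟩ with hs
  set d : Fin n → ℝ := fun i => (∑ j, A i j) + -s
  have hd : ∀ i, 0 < d i := fun i => add_pos_of_nonneg_of_pos
    (sum_nonneg fun j _ => by rcases hA01 i j with h | h <;> simp [h]) (by linarith)
  have hB : D + (-s) • 1 = diagonal d := by rw [hD, smul_one_eq_diagonal, diagonal_add]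
  have hr0 : 0 < r := by linarith
  have hS := isHermitian_diagonal_mul_mul_diagonal hAsymm fun i => (√(d i))⁻¹
  have hroots : ((D + (-s) • 1)⁻¹ * A).charpoly.roots = Multiset.map hS.eigenvalues univ.val := by
    rw [hB, charpoly_inv_diagonal_mul hd, hS.roots_charpoly_eq_eigenvalues]
    simp
  obtain ⟨hbelow, habove⟩ := hH.card_eigenvalues_lt_eq_of_sub_smul_one_eq (r := r) (c := s) hd
    hr0 hS (by rw [← hB, neg_smul]; abel)
  obtain ⟨hs_below, hs_above⟩ := (Tuple.apply_sort_eq_iff _ _ _).1 hs.symm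
  refine ⟨by rw [hroots]; simp, ?_, fun x hx => ?_⟩
  · rw [kthLargestRoot, hroots, show n - 1 - (p - 1) = ((⟨n - p, by omega⟩ : Fin n) : ℕ) by
      simp only; omega, Multiset.getD_sort_map_univ, Tuple.apply_sort_eq_iff, one_div]
    simp only at hs_below hs_above ⊢
    omega
  · rw [one_div]
    refine inv_add_smul_one_mul_mulVec_eq ?_ hr0.ne' hx
    rw [hB, det_diagonal, isUnit_iff_ne_zero]
    exact prod_ne_zero_iff.2 fun i _ => (hd i).ne'
end

section
/- Let G' be obtained from a finite graph G by adding one new vertex i together with a single edge (i,j) to an existing vertex j. Then every nonzero eigenvalue of the non-backtracking matrix B(G') is an eigenvalue of B(G); equivalently, det(B(G') - γ I) = γ² · det(B(G) - γ I) for all γ. -/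
open Matrix

/-- The type of directed edges of a simple graph. -/
abbrev dirEdge {V : Type*} (G : SimpleGraph V) : Type _ := {e : V × V // G.Adj e.1 e.2}

noncomputable instance {V : Type*} [Finite V] (G : SimpleGraph V) : Fintype (dirEdge G) :=
  Fintype.ofFinite _

/-- The non-backtracking matrix `B_{(i→j),(k→l)} = δ_{jk} (1 - δ_{il})`. -/
def nbMatrix {V : Type*} [DecidableEq V] (G : SimpleGraph V) :
    Matrix (dirEdge G) (dirEdge G) ℝ :=
  Matrix.of fun e f => if e.val.2 = f.val.1 ∧ e.val.1 ≠ f.val.2 then (1 : ℝ) else 0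

/-- The graph obtained from `G` by adding one new (pendant) vertex, `none`, attached
by a single edge to the existing vertex `j`. -/
def addPendant {V : Type*} (G : SimpleGraph V) (j : V) : SimpleGraph (Option V) where
  Adj a b := (∃ x y, a = some x ∧ b = some y ∧ G.Adj x y) ∨
    (a = none ∧ b = some j) ∨ (a = some j ∧ b = none)
  symm := by
    constructor
    rintro a b (⟨x, y, rfl, rfl, h⟩ | ⟨rfl, rfl⟩ | ⟨rfl, rfl⟩)
    · exact Or.inl ⟨y, x, rfl, rfl, h.symm⟩
    · exact Or.inr (Or.inr ⟨rfl, rfl⟩)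
    · exact Or.inr (Or.inl ⟨rfl, rfl⟩)
  loopless := by
    constructor
    rintro a (⟨x, y, h1, h2, h3⟩ | ⟨h1, h2⟩ | ⟨h1, h2⟩)
    · rw [h1] at h2; cases h2; exact G.irrefl h3
    · rw [h1] at h2; exact absurd h2 (by simp)
    · rw [h1] at h2; exact absurd h2 (by simp)

namespace addPendant

variable {V : Type*} (G : SimpleGraph V) (j : V)

@[simp]
theorem adj_some_some {x y : V} : (addPendant G j).Adj (some x) (some y) ↔ G.Adj x y := by
  simp [addPendant]

@[simp]
theorem adj_none {b : Option V} : (addPendant G j).Adj none b ↔ b = some j := by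
  simp [addPendant]

@[simp]
theorem adj_some_none {x : V} : (addPendant G j).Adj (some x) none ↔ x = j := by
  simp [addPendant, eq_comm]

def dirEdgeEquiv : (dirEdge G ⊕ Unit) ⊕ Unit ≃ dirEdge (addPendant G j) where
  toFun
    | .inl (.inl e) => ⟨(some e.1.1, some e.1.2), (adj_some_some G j).2 e.2⟩
    | .inl (.inr _) => ⟨(none, some j), (adj_none G j).2 rfl⟩
    | .inr _ => ⟨(some j, none), (adj_some_none G j).2 rfl⟩
  invFun
    | ⟨(some x, some y), h⟩ => .inl (.inl ⟨(x, y), (adj_some_some G j).1 h⟩)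
    | ⟨(none, _), _⟩ => .inl (.inr ())
    | ⟨(some _, none), _⟩ => .inr ()
  left_inv := by
    rintro ((e | _) | _) <;> rfl
  right_inv := by
    rintro ⟨⟨_ | x, _ | y⟩, h⟩
    · simp at h
    · obtain rfl : y = j := by simpa using h
      rfl
    · obtain rfl : x = j := by simpa using h
      rfl
    · rfl

variable [DecidableEq V]

/-- In the basis `dirEdgeEquiv`, the non-backtracking matrix of `addPendant G j` is block
triangular: nothing enters `none → j`, nothing leaves `j → none`, and `none → j` cannot be
followed by `j → none`. -/
theorem nbMatrix_submatrix_dirEdgeEquiv :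
    (nbMatrix (addPendant G j)).submatrix (dirEdgeEquiv G j) (dirEdgeEquiv G j) =
      fromBlocks
        (fromBlocks (nbMatrix G) 0 (of fun _ (e : dirEdge G) => if j = e.1.1 then 1 else 0) 0)
        (of fun x _ => Sum.elim (fun e : dirEdge G => if e.1.2 = j then 1 else 0) 0 x) 0 0 := by
  ext ((e | _) | _) ((f | _) | _) <;>
    simp [dirEdgeEquiv, nbMatrix, fromBlocks, eq_comm]

end addPendant

theorem det_fromBlocks_fromBlocks_zero_sub_smul {R n m p : Type*} [CommRing R]
    [Fintype n] [DecidableEq n] [Fintype m] [DecidableEq m] [Fintype p] [DecidableEq p]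
    (A : Matrix n n R) (C : Matrix m n R) (B : Matrix (n ⊕ m) p R) (γ : R) :
    (fromBlocks (fromBlocks A 0 C (0 : Matrix m m R)) B 0 (0 : Matrix p p R) - γ • 1).det =
      (-γ) ^ (Fintype.card m + Fintype.card p) * (A - γ • 1).det := by
  have hblocks : fromBlocks (fromBlocks A 0 C (0 : Matrix m m R)) B 0 (0 : Matrix p p R) - γ • 1 =
      fromBlocks (fromBlocks (A - γ • 1) 0 C (-γ • 1)) B 0 (-γ • 1) := by
    ext ((i | i) | i) ((k | k) | k) <;> simp [one_apply]
  rw [hblocks, det_fromBlocks_zero₂₁, det_fromBlocks_zero₁₂]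
  simp only [det_smul, det_one]
  ring

theorem det_map_nbMatrix_addPendant_sub_smul {V R : Type*} [Fintype V] [DecidableEq V]
    [CommRing R] (f : ℝ →+* R) (G : SimpleGraph V) (j : V) (γ : R) :
    ((nbMatrix (addPendant G j)).map f - γ • 1).det = γ ^ 2 * ((nbMatrix G).map f - γ • 1).det := by
  set e := addPendant.dirEdgeEquiv G j
  have hsub : ∀ X, (X - γ • 1 : Matrix _ _ R).submatrix e e = X.submatrix e e - γ • 1 := by
    intro X
    rw [← submatrix_one_equiv e]
    rfl
  rw [← det_submatrix_equiv_self e, hsub, submatrix_map,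
    addPendant.nbMatrix_submatrix_dirEdgeEquiv]
  simp only [fromBlocks_map, Matrix.map_zero _ (map_zero f)]
  rw [det_fromBlocks_fromBlocks_zero_sub_smul, Fintype.card_unit, neg_sq]

/-- adding a pendant vertex multiplies the characteristic polynomial of
the non-backtracking matrix by `γ²`; in particular every nonzero eigenvalue of
`B(G')` is an eigenvalue of `B(G)`. -/
theorem stmt4 {V : Type*} [Fintype V] [DecidableEq V] (G : SimpleGraph V) (j : V) :
    (∀ γ : ℂ, (((nbMatrix (addPendant G j)).map Complex.ofReal) - γ • 1).det
        = γ ^ 2 * (((nbMatrix G).map Complex.ofReal) - γ • 1).det) ∧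
    (∀ γ : ℂ, γ ≠ 0 →
      (((nbMatrix (addPendant G j)).map Complex.ofReal) - γ • 1).det = 0 →
      (((nbMatrix G).map Complex.ofReal) - γ • 1).det = 0) := by
  have hdet : ∀ γ : ℂ, (((nbMatrix (addPendant G j)).map Complex.ofReal) - γ • 1).det
      = γ ^ 2 * (((nbMatrix G).map Complex.ofReal) - γ • 1).det :=
    det_map_nbMatrix_addPendant_sub_smul Complex.ofRealHom G j
  refine ⟨hdet, fun γ hγ h => ?_⟩
  rw [hdet] at h
  exact (mul_eq_zero.1 h).resolve_left (pow_ne_zero 2 hγ)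
end

section
/- Let G be a finite connected graph with exactly as many edges as vertices (so G contains exactly one cycle). Then the spectral radius of its non-backtracking matrix equals 1. -/
/-!
Removing a leaf `u` with neighbour `w` multiplies `det (B - γ)` by `γ ^ 2`: ordering the directed
edges as `u → w`, then the others, then `w → u` makes `B` block triangular, because `u → w` never
continues an edge and `w → u` has no continuation. Pruning a leaf keeps the graph connected with as
many edges as vertices, and a leafless such graph is 2-regular by the handshake lemma. There every
directed edge has exactly one continuation, so `B` is the matrix of a self-map `s` of a finite set:
an eigenvector satisfies `v ∘ s = γ • v`, and eventual periodicity of `s` forces `γ = 0` or `γ` a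
root of unity, while the constant vector has eigenvalue `1`.
-/

open Matrix

namespace Matrix

variable {ι R : Type*} [Fintype ι] [DecidableEq ι] {f : ι → ι}

theorem mulVec_eq_comp_of_apply_eq_ite [NonAssocSemiring R] {A : Matrix ι ι R}
    (hA : ∀ i j, A i j = if j = f i then 1 else 0) (v : ι → R) : A *ᵥ v = v ∘ f := by
  ext i
  simp [mulVec, dotProduct, hA]

variable [CommRing R] [IsDomain R] {A : Matrix ι ι R}

theorem det_sub_one_eq_zero_of_apply_eq_ite [Nonempty ι]
    (hA : ∀ i j, A i j = if j = f i then 1 else 0) : (A - 1).det = 0 := by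
  rw [← exists_mulVec_eq_zero_iff]
  refine ⟨fun _ => 1, Function.ne_iff.mpr ⟨Classical.arbitrary ι, one_ne_zero⟩, ?_⟩
  rw [sub_mulVec, mulVec_eq_comp_of_apply_eq_ite hA, one_mulVec]
  exact sub_self _

theorem eq_zero_or_isOfFinOrder_of_det_sub_smul_eq_zero
    (hA : ∀ i j, A i j = if j = f i then 1 else 0) {γ : R} (h : (A - γ • 1).det = 0) :
    γ = 0 ∨ IsOfFinOrder γ := by
  obtain ⟨v, hv0, hv⟩ := exists_mulVec_eq_zero_iff.mpr h
  have hstep : ∀ i, v (f i) = γ * v i := by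
    intro i
    have := congrFun hv i
    rw [sub_mulVec, smul_mulVec, one_mulVec, mulVec_eq_comp_of_apply_eq_ite hA] at this
    simpa [sub_eq_zero] using this
  have hiter : ∀ k i, v (f^[k] i) = γ ^ k * v i := by
    intro k
    induction k with
    | zero => simp
    | succ k ih => intro i; rw [Function.iterate_succ_apply', hstep, ih, pow_succ', mul_assoc]
  obtain ⟨i, hi⟩ := Function.ne_iff.mp hv0
  obtain ⟨m, n, hmn, hper⟩ :=
    Set.finite_univ.exists_lt_map_eq_of_forall_mem (f := fun k => f^[k] i) fun _ => Set.mem_univ _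
  refine or_iff_not_imp_left.mpr fun hγ => isOfFinOrder_iff_pow_eq_one.mpr ⟨n - m, by omega, ?_⟩
  have : γ ^ m * γ ^ (n - m) = γ ^ m * 1 := by
    rw [← pow_add, Nat.add_sub_cancel' hmn.le, mul_one]
    exact mul_right_cancel₀ hi (by rw [← hiter, ← hiter, hper])
  exact mul_left_cancel₀ (pow_ne_zero m hγ) this

end Matrix

namespace SimpleGraph

section

variable {V : Type*} (G : SimpleGraph V)

theorem degree_eq_two_of_card_edgeFinset_eq [Fintype V] [DecidableRel G.Adj]
    (hdeg : ∀ v, 2 ≤ G.degree v) (hcard : G.edgeFinset.card = Fintype.card V) (v : V) :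
    G.degree v = 2 := by
  have hsum : ∑ v, G.degree v = ∑ _v : V, 2 := by
    simp [sum_degrees_eq_twice_card_edges, hcard, mul_comm]
  exact ((Finset.sum_eq_sum_iff_of_le fun v _ => hdeg v).mp hsum.symm v (Finset.mem_univ v)).symm

def dirEdgeInduceEquiv (s : Set V) :
    dirEdge (G.induce s) ≃ {e : dirEdge G // e.val.1 ∈ s ∧ e.val.2 ∈ s} where
  toFun e := ⟨⟨(e.val.1, e.val.2), e.prop⟩, e.val.1.prop, e.val.2.prop⟩
  invFun e := ⟨(⟨_, e.prop.1⟩, ⟨_, e.prop.2⟩), e.val.prop⟩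
  left_inv _ := rfl
  right_inv _ := rfl

variable [DecidableEq V]

theorem nbMatrix_apply_self (e : dirEdge G) : nbMatrix G e e = 0 :=
  if_neg fun h => G.ne_of_adj e.prop h.1.symm

theorem exists_nbMatrix_eq_ite_of_degree_eq_two [G.LocallyFinite] (hdeg : ∀ v, G.degree v = 2) :
    ∃ s : dirEdge G → dirEdge G, ∀ e f, nbMatrix G e f = if f = s e then 1 else 0 := by
  have hsucc : ∀ e : dirEdge G, ∃ f : dirEdge G, ∀ g : dirEdge G,
      (e.val.2 = g.val.1 ∧ e.val.1 ≠ g.val.2) ↔ g = f := by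
    rintro ⟨⟨x, y⟩, hxy⟩
    have hx : x ∈ G.neighborFinset y := (G.mem_neighborFinset y x).mpr hxy.symm
    obtain ⟨z, hz⟩ : ∃ z, (G.neighborFinset y).erase x = {z} := Finset.card_eq_one.mp <| by
      rw [Finset.card_erase_of_mem hx, card_neighborFinset_eq_degree, hdeg]
    have hz' : z ≠ x ∧ G.Adj y z := by
      simpa using (Finset.ext_iff.mp hz z).mpr (Finset.mem_singleton_self z)
    refine ⟨⟨(y, z), hz'.2⟩, fun ⟨⟨y', z'⟩, hyz'⟩ => ⟨?_, ?_⟩⟩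
    · rintro ⟨rfl, hxz'⟩
      have : z' ∈ (G.neighborFinset y).erase x := by simpa [Ne.symm hxz'] using hyz'
      rw [hz, Finset.mem_singleton] at this
      subst this
      rfl
    · intro h
      cases h
      exact ⟨rfl, hz'.1.symm⟩
  choose s hs using hsucc
  exact ⟨s, fun e f => by simp only [nbMatrix, of_apply, hs]⟩

theorem nbMatrix_induce (s : Set V) (e f : dirEdge (G.induce s)) :
    nbMatrix (G.induce s) e f =
      nbMatrix G (G.dirEdgeInduceEquiv s e) (G.dirEdgeInduceEquiv s f) := by
  simp [nbMatrix, dirEdgeInduceEquiv, Subtype.ext_iff]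

def leafLevel (u : V) (e : dirEdge G) : Fin 3 :=
  if e.val.1 = u then 0 else if e.val.2 = u then 2 else 1

variable {u w : V}

theorem leafLevel_eq_zero_iff {e : dirEdge G} : G.leafLevel u e = 0 ↔ e.val.1 = u := by
  unfold leafLevel; split_ifs <;> simp_all

theorem leafLevel_eq_one_iff {e : dirEdge G} :
    G.leafLevel u e = 1 ↔ e.val.1 ≠ u ∧ e.val.2 ≠ u := by
  unfold leafLevel; split_ifs <;> simp_all

theorem leafLevel_eq_two_iff {e : dirEdge G} :
    G.leafLevel u e = 2 ↔ e.val.1 ≠ u ∧ e.val.2 = u := by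
  unfold leafLevel; split_ifs <;> simp_all

theorem blockTriangular_nbMatrix_leafLevel (hleaf : ∀ z, G.Adj u z ↔ z = w) :
    (nbMatrix G).BlockTriangular (G.leafLevel u) := by
  intro e f hlt
  refine if_neg ?_
  rintro ⟨hef, hne⟩
  have hw : ∀ g : dirEdge G, g.val.1 = u → g.val.2 = w := fun g hg => (hleaf _).mp (hg ▸ g.prop)
  have hw' : ∀ g : dirEdge G, g.val.2 = u → g.val.1 = w := fun g hg =>
    (hleaf _).mp (hg ▸ g.prop.symm)
  simp only [leafLevel] at hlt
  split_ifs at hlt <;> simp_all [Fin.lt_def]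

theorem det_toSquareBlock_leafLevel_one [Finite V] (γ : ℂ) :
    (((nbMatrix G).map Complex.ofReal - γ • 1).toSquareBlock (G.leafLevel u) 1).det =
      ((nbMatrix (G.induce {u}ᶜ)).map Complex.ofReal - γ • 1).det := by
  let ψ : {e // G.leafLevel u e = 1} ≃ dirEdge (G.induce {u}ᶜ) :=
    (Equiv.subtypeEquivRight fun _ => by
      simpa only [Set.mem_compl_singleton_iff] using G.leafLevel_eq_one_iff).trans
      (G.dirEdgeInduceEquiv {u}ᶜ).symm
  rw [← det_submatrix_equiv_self ψ]
  congr 1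
  ext e f
  simp [ψ, toSquareBlock_def, nbMatrix_induce, one_apply, Subtype.ext_iff]

theorem det_nbMatrix_sub_smul_of_leaf [Finite V] (hleaf : ∀ z, G.Adj u z ↔ z = w) (γ : ℂ) :
    ((nbMatrix G).map Complex.ofReal - γ • 1).det =
      γ ^ 2 * ((nbMatrix (G.induce {u}ᶜ)).map Complex.ofReal - γ • 1).det := by
  set M := (nbMatrix G).map Complex.ofReal - γ • 1
  have huw : G.Adj u w := (hleaf w).mpr rfl
  have hM : M.BlockTriangular (G.leafLevel u) := fun e f hlt => by
    have hne : e ≠ f := fun h => hlt.ne' (h ▸ rfl)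
    simp [M, G.blockTriangular_nbMatrix_leafLevel hleaf hlt, one_apply, hne]
  have hdiag (k : Fin 3) (e : dirEdge G) (hk : G.leafLevel u e = k)
      (hsub : ∀ f, G.leafLevel u f = k → f = e) : (M.toSquareBlock (G.leafLevel u) k).det = -γ := by
    have : Subsingleton {f // G.leafLevel u f = k} :=
      ⟨fun f g => Subtype.ext ((hsub f f.prop).trans (hsub g g.prop).symm)⟩
    rw [det_eq_elem_of_subsingleton _ ⟨e, hk⟩]
    simp [M, toSquareBlock_def, nbMatrix_apply_self]
  have h0 : (M.toSquareBlock (G.leafLevel u) 0).det = -γ := by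
    refine hdiag 0 ⟨(u, w), huw⟩ (by simp [leafLevel]) fun ⟨⟨x, y⟩, hxy⟩ hf => ?_
    obtain rfl : x = u := (G.leafLevel_eq_zero_iff).mp hf
    simp [(hleaf y).mp hxy]
  have h2 : (M.toSquareBlock (G.leafLevel u) 2).det = -γ := by
    refine hdiag 2 ⟨(w, u), huw.symm⟩ (by simp [leafLevel, huw.ne']) fun ⟨⟨x, y⟩, hxy⟩ hf => ?_
    obtain rfl : y = u := ((G.leafLevel_eq_two_iff).mp hf).2
    simp [(hleaf x).mp hxy.symm]
  rw [hM.det_fintype, Fin.prod_univ_three, h0, G.det_toSquareBlock_leafLevel_one, h2]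
  ring

theorem card_edgeFinset_induce_compl_singleton_of_degree_eq_one [Fintype V] [DecidableRel G.Adj]
    (hu : G.degree u = 1) (hcard : G.edgeFinset.card = Fintype.card V) :
    (G.induce {u}ᶜ).edgeFinset.card = Fintype.card ↥({u}ᶜ : Set V) := by
  rw [card_edgeFinset_induce_compl_singleton, card_edgeFinset_deleteIncidenceSet, hu, hcard,
    Fintype.card_compl_set, Set.card_singleton]

end

theorem Connected.nbMatrix_eigenvalues_of_card_edgeFinset_eq {V : Type*} [Fintype V]
    [DecidableEq V] {G : SimpleGraph V} [DecidableRel G.Adj] (hconn : G.Connected)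
    (hcard : G.edgeFinset.card = Fintype.card V) :
    ((nbMatrix G).map Complex.ofReal - 1).det = 0 ∧
      ∀ γ : ℂ, ((nbMatrix G).map Complex.ofReal - γ • 1).det = 0 → γ = 0 ∨ ‖γ‖ = 1 := by
  by_cases hleaf : ∃ u, G.degree u = 1
  · obtain ⟨u, hu⟩ := hleaf
    obtain ⟨w, huw, hw⟩ := degree_eq_one_iff_existsUnique_adj.mp hu
    have hdet := G.det_nbMatrix_sub_smul_of_leaf (u := u) (w := w)
      fun z => ⟨hw z, by rintro rfl; exact huw⟩
    obtain ⟨hone, hroots⟩ :=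
      (hconn.induce_compl_singleton_of_degree_eq_one hu).nbMatrix_eigenvalues_of_card_edgeFinset_eq
        (G.card_edgeFinset_induce_compl_singleton_of_degree_eq_one hu hcard)
    refine ⟨by simpa [hone] using hdet 1, fun γ hγ => ?_⟩
    rw [hdet, mul_eq_zero] at hγ
    exact hγ.elim (fun h => .inl (pow_eq_zero_iff two_ne_zero |>.mp h)) (hroots γ)
  · obtain ⟨x, y, hxy⟩ : ∃ x y, G.Adj x y := by
      have : Nonempty V := hconn.nonempty
      obtain ⟨e, he⟩ := Finset.card_pos.mp (hcard ▸ Fintype.card_pos)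
      induction e using Sym2.ind with | h x y => exact ⟨x, y, G.mem_edgeFinset.mp he⟩
    have : Nontrivial V := hxy.nontrivial
    have : Nonempty (dirEdge G) := ⟨⟨(x, y), hxy⟩⟩
    have hdeg : ∀ v, G.degree v = 2 := G.degree_eq_two_of_card_edgeFinset_eq (fun v => by
      have := hconn.preconnected.degree_pos_of_nontrivial v
      have := not_exists.mp hleaf v
      omega) hcard
    obtain ⟨s, hs⟩ := G.exists_nbMatrix_eq_ite_of_degree_eq_two hdeg
    have hA : ∀ e f, (nbMatrix G).map Complex.ofReal e f = if f = s e then 1 else 0 := by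
      simp [hs, apply_ite]
    exact ⟨det_sub_one_eq_zero_of_apply_eq_ite hA, fun γ hγ =>
      (eq_zero_or_isOfFinOrder_of_det_sub_smul_eq_zero hA hγ).imp_right IsOfFinOrder.norm_eq_one⟩
termination_by Fintype.card V
decreasing_by exact Fintype.card_subtype_lt (p := (· ∈ ({u}ᶜ : Set V))) (x := u) (by simp)

end SimpleGraph

/-- a finite connected graph with exactly as many edges as vertices has
non-backtracking spectral radius `1`: some (complex) eigenvalue has modulus `1`, and
all eigenvalues have modulus at most `1`. -/
theorem stmt6 {V : Type*} [Fintype V] [DecidableEq V] (G : SimpleGraph V)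
    [DecidableRel G.Adj] (hconn : G.Connected)
    (hcard : G.edgeFinset.card = Fintype.card V) :
    (∃ γ : ℂ, (((nbMatrix G).map Complex.ofReal) - γ • 1).det = 0 ∧ ‖γ‖ = 1) ∧
    (∀ γ : ℂ, (((nbMatrix G).map Complex.ofReal) - γ • 1).det = 0 → ‖γ‖ ≤ 1) := by
  obtain ⟨hone, hroots⟩ := hconn.nbMatrix_eigenvalues_of_card_edgeFinset_eq hcard
  refine ⟨⟨1, by simpa using hone, norm_one⟩, fun γ hγ => ?_⟩
  rcases hroots γ hγ with rfl | hnorm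
  · simp
  · exact hnorm.le
end

section
/- Let H_r = (r²−1)I + D − rA for a finite graph, fix r_t > 1, and let X ∈ ℝ^{n×p} have orthonormal columns consisting of eigenvectors of H_{r_t} for its p smallest eigenvalues, with S = diag of those eigenvalues. Then for every r' ∈ ℝ, the p-th smallest eigenvalue of H_{r'} satisfies r_t · s_p^↑(H_{r'}) ≤ (r' − r_t)(1 + r' r_t) + λ_max( (r_t − r') XᵀDX + r' S ). -/
/-!
Courant–Fischer with the test space spanned by the columns of `X`: some `x = X c` with `c ≠ 0` is
orthogonal to the eigenvectors of `H_{r'}` for its `p - 1` smallest eigenvalues, so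
`s_p^↑(H_{r'}) ‖x‖² ≤ ⟪x, H_{r'} x⟫ = ⟪c, Xᵀ H_{r'} X c⟫`, and `‖x‖ = ‖c‖` as `XᵀX = 1`.
Compressing by `X` commutes with `r ↦ H_r`, and in
`r_t H_{r'} = (r' - r_t)(1 + r' r_t) I + (r_t - r') D + r' H_{r_t}` the adjacency matrix cancels;
hence `r_t Xᵀ H_{r'} X = (r' - r_t)(1 + r' r_t) I + (r_t - r') XᵀDX + r' S`, whose Rayleigh quotient
is at most `(r' - r_t)(1 + r' r_t) + λ_max((r_t - r') XᵀDX + r' S)`.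
-/

open Matrix

/-- The largest (real) eigenvalue of a matrix, as the supremum of its set of real
eigenvalues. For a symmetric matrix this is `λ_max`. -/
noncomputable def lambdaMax {m : ℕ} (M : Matrix (Fin m) (Fin m) ℝ) : ℝ :=
  sSup {t : ℝ | ∃ x : Fin m → ℝ, x ≠ 0 ∧ M *ᵥ x = t • x}

namespace Matrix.IsHermitian

section

variable {ι : Type*} [Fintype ι] [DecidableEq ι] {M : Matrix ι ι ℝ} (hM : M.IsHermitian)

lemma star_eigenvectorUnitary_mulVec_apply (x : ι → ℝ) (i : ι) :
    (star (hM.eigenvectorUnitary : Matrix ι ι ℝ) *ᵥ x) i = ⇑(hM.eigenvectorBasis i) ⬝ᵥ x := by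
  simp [mulVec, dotProduct, star_apply]

lemma dotProduct_eigenvectorUnitary_mulVec (x y : ι → ℝ) :
    x ⬝ᵥ ((hM.eigenvectorUnitary : Matrix ι ι ℝ) *ᵥ y) =
      (star (hM.eigenvectorUnitary : Matrix ι ι ℝ) *ᵥ x) ⬝ᵥ y := by
  rw [dotProduct_mulVec, ← vecMul_transpose, star_eq_conjTranspose,
    conjTranspose_eq_transpose_of_trivial, transpose_transpose]

lemma dotProduct_mulVec_eq_sum (x : ι → ℝ) :
    x ⬝ᵥ (M *ᵥ x) = ∑ i, hM.eigenvalues i * (⇑(hM.eigenvectorBasis i) ⬝ᵥ x) ^ 2 := by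
  have hspec : M *ᵥ x = (hM.eigenvectorUnitary : Matrix ι ι ℝ) *ᵥ
      (diagonal hM.eigenvalues *ᵥ (star (hM.eigenvectorUnitary : Matrix ι ι ℝ) *ᵥ x)) := by
    conv_lhs => rw [hM.spectral_theorem]
    simp [Unitary.conjStarAlgAut_apply, mulVec_mulVec, Matrix.mul_assoc]
  rw [hspec, dotProduct_eigenvectorUnitary_mulVec]
  simp only [dotProduct, mulVec_diagonal, star_eigenvectorUnitary_mulVec_apply]
  exact Finset.sum_congr rfl fun i _ => by ring

lemma dotProduct_self_eq_sum_sq (x : ι → ℝ) :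
    x ⬝ᵥ x = ∑ i, (⇑(hM.eigenvectorBasis i) ⬝ᵥ x) ^ 2 := by
  have hx : x = (hM.eigenvectorUnitary : Matrix ι ι ℝ) *ᵥ
      (star (hM.eigenvectorUnitary : Matrix ι ι ℝ) *ᵥ x) := by
    rw [mulVec_mulVec, (Unitary.mem_iff.mp hM.eigenvectorUnitary.2).2, one_mulVec]
  nth_rewrite 2 [hx]
  rw [dotProduct_eigenvectorUnitary_mulVec]
  simp only [dotProduct, star_eigenvectorUnitary_mulVec_apply, sq]

lemma dotProduct_mulVec_le_of_eigenvalues_le {μ : ℝ} (h : ∀ i, hM.eigenvalues i ≤ μ)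
    (x : ι → ℝ) : x ⬝ᵥ (M *ᵥ x) ≤ μ * (x ⬝ᵥ x) := by
  rw [hM.dotProduct_mulVec_eq_sum, hM.dotProduct_self_eq_sum_sq, Finset.mul_sum]
  exact Finset.sum_le_sum fun i _ => mul_le_mul_of_nonneg_right (h i) (sq_nonneg _)

lemma le_dotProduct_mulVec_of_le_eigenvalues {μ : ℝ} {x : ι → ℝ}
    (h : ∀ i, ⇑(hM.eigenvectorBasis i) ⬝ᵥ x ≠ 0 → μ ≤ hM.eigenvalues i) :
    μ * (x ⬝ᵥ x) ≤ x ⬝ᵥ (M *ᵥ x) := by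
  rw [hM.dotProduct_mulVec_eq_sum, hM.dotProduct_self_eq_sum_sq, Finset.mul_sum]
  refine Finset.sum_le_sum fun i _ => ?_
  by_cases hi : ⇑(hM.eigenvectorBasis i) ⬝ᵥ x = 0
  · simp [hi]
  · exact mul_le_mul_of_nonneg_right (h i hi) (sq_nonneg _)

end

lemma eigenvalues_le_lambdaMax {m : ℕ} {M : Matrix (Fin m) (Fin m) ℝ} (hM : M.IsHermitian)
    (i : Fin m) : hM.eigenvalues i ≤ lambdaMax M := by
  have hsub : {t : ℝ | ∃ x : Fin m → ℝ, x ≠ 0 ∧ M *ᵥ x = t • x} ⊆ spectrum ℝ M := by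
    rintro t ⟨x, hx0, hx⟩
    rw [← spectrum_toLin']
    exact (Module.End.hasEigenvalue_of_hasEigenvector
      ⟨Module.End.mem_eigenspace_iff.mpr (by rwa [toLin'_apply]), hx0⟩).mem_spectrum
  refine le_csSup (finite_real_spectrum.subset hsub).bddAbove
    ⟨⇑(hM.eigenvectorBasis i), by simpa using hM.eigenvectorBasis.orthonormal.ne_zero i,
      hM.mulVec_eigenvectorBasis i⟩

lemma dotProduct_mulVec_le_lambdaMax {m : ℕ} {M : Matrix (Fin m) (Fin m) ℝ} (hM : M.IsHermitian)
    (x : Fin m → ℝ) :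
    x ⬝ᵥ (M *ᵥ x) ≤ lambdaMax M * (x ⬝ᵥ x) :=
  hM.dotProduct_mulVec_le_of_eigenvalues_le hM.eigenvalues_le_lambdaMax x

theorem exists_sortEig_mul_le {n p : ℕ} {M : Matrix (Fin n) (Fin n) ℝ} (hM : M.IsHermitian)
    (X : Matrix (Fin n) (Fin p) ℝ) (k : Fin n) (hk : (k : ℕ) < p) :
    ∃ c ≠ 0, sortEig hM k * ((X *ᵥ c) ⬝ᵥ (X *ᵥ c)) ≤ (X *ᵥ c) ⬝ᵥ (M *ᵥ (X *ᵥ c)) := by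
  set σ := Tuple.sort hM.eigenvalues
  let N : Matrix (Fin k) (Fin p) ℝ :=
    (of fun j => ⇑(hM.eigenvectorBasis (σ (Fin.castLE k.isLt.le j)))) * X
  have hker : LinearMap.ker (toLin' N) ≠ ⊥ :=
    LinearMap.ker_ne_bot_of_finrank_lt (by simpa using hk)
  obtain ⟨c, hc, hc0⟩ := (Submodule.ne_bot_iff _).mp hker
  refine ⟨c, hc0, hM.le_dotProduct_mulVec_of_le_eigenvalues fun i hi => ?_⟩
  obtain ⟨j, rfl⟩ := σ.surjective i
  have hkj : k ≤ j := by
    by_contra! hjk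
    refine hi ?_
    have := congrFun (LinearMap.mem_ker.mp hc) ⟨j, hjk⟩
    rwa [toLin'_apply, ← mulVec_mulVec] at this
  exact Tuple.monotone_sort hM.eigenvalues hkj

end Matrix.IsHermitian

def betheHessian {ι : Type*} [DecidableEq ι] (A D : Matrix ι ι ℝ) (r : ℝ) : Matrix ι ι ℝ :=
  (r ^ 2 - 1) • 1 + D - r • A

lemma transpose_mul_betheHessian_mul {ι κ : Type*} [Fintype ι] [DecidableEq ι] [DecidableEq κ]
    {X : Matrix ι κ ℝ} (hX : Xᵀ * X = 1) (A D : Matrix ι ι ℝ) (r : ℝ) :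
    Xᵀ * betheHessian A D r * X = betheHessian (Xᵀ * A * X) (Xᵀ * D * X) r := by
  simp only [betheHessian, Matrix.mul_sub, Matrix.sub_mul, Matrix.mul_add, Matrix.add_mul,
    Matrix.mul_smul, Matrix.smul_mul, Matrix.mul_one, hX]

lemma smul_betheHessian {ι : Type*} [DecidableEq ι] (A D : Matrix ι ι ℝ) (r s : ℝ) :
    s • betheHessian A D r =
      ((r - s) * (1 + r * s)) • 1 + ((s - r) • D + r • betheHessian A D s) := by
  simp only [betheHessian]
  module

lemma dotProduct_mulVec_mulVec_eq {ι κ : Type*} [Fintype ι] [Fintype κ]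
    (X : Matrix ι κ ℝ) (N : Matrix ι ι ℝ) (c : κ → ℝ) :
    (X *ᵥ c) ⬝ᵥ (N *ᵥ (X *ᵥ c)) = c ⬝ᵥ ((Xᵀ * N * X) *ᵥ c) := by
  rw [← mulVec_mulVec, ← mulVec_mulVec, dotProduct_mulVec c Xᵀ, vecMul_transpose]

lemma transpose_mul_mul_eq_diagonal {ι κ : Type*} [Fintype ι] [Fintype κ] [DecidableEq κ]
    {X : Matrix ι κ ℝ} (hX : Xᵀ * X = 1) {M : Matrix ι ι ℝ} {s : κ → ℝ}
    (hcol : ∀ i, M *ᵥ (fun j => X j i) = s i • fun j => X j i) :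
    Xᵀ * M * X = diagonal s := by
  have hMX : M * X = X * diagonal s := by
    ext j i
    rw [mul_diagonal, mul_comm]
    exact congrFun (hcol i) j
  rw [Matrix.mul_assoc, hMX, ← Matrix.mul_assoc, hX, Matrix.one_mul]

/-- Courant–Fischer bound. If the columns of `X` are orthonormal
eigenvectors of `H_{r_t}` for its `p` smallest eigenvalues (with `S` the diagonal of
those eigenvalues), then for every `r'`,
`r_t · s_p^↑(H_{r'}) ≤ (r'−r_t)(1+r'r_t) + λ_max((r_t−r') XᵀDX + r' S)`. -/
theorem stmt11 {n : ℕ} (A D : Matrix (Fin n) (Fin n) ℝ)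
    (hH : ∀ r : ℝ,
      ((r ^ 2 - 1) • (1 : Matrix (Fin n) (Fin n) ℝ) + D - r • A).IsHermitian)
    (rt : ℝ) (hrt : 1 < rt)
    (p : ℕ) (hp1 : 1 ≤ p) (hpn : p ≤ n)
    (X : Matrix (Fin n) (Fin p) ℝ) (hX : Xᵀ * X = 1)
    (heig : ∀ i : Fin p,
      ((rt ^ 2 - 1) • (1 : Matrix (Fin n) (Fin n) ℝ) + D - rt • A) *ᵥ (fun j => X j i)
        = sortEig (hH rt) (Fin.castLE hpn i) • fun j => X j i) :
    ∀ r' : ℝ,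
      rt * sortEig (hH r') ⟨p - 1, by omega⟩ ≤
        (r' - rt) * (1 + r' * rt) +
          lambdaMax ((rt - r') • (Xᵀ * D * X) +
            r' • Matrix.diagonal (fun i : Fin p => sortEig (hH rt) (Fin.castLE hpn i))) := by
  intro r'
  set κ := (r' - rt) * (1 + r' * rt)
  set M := (rt - r') • (Xᵀ * D * X) +
    r' • Matrix.diagonal (fun i : Fin p => sortEig (hH rt) (Fin.castLE hpn i))
  have hS : Xᵀ * betheHessian A D rt * X = diagonal _ := transpose_mul_mul_eq_diagonal hX heig
  have hcompress : rt • (Xᵀ * betheHessian A D r' * X) = κ • 1 + M := by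
    rw [transpose_mul_betheHessian_mul hX, smul_betheHessian, ← transpose_mul_betheHessian_mul hX,
      hS]
  have hM : M.IsHermitian := by
    have h := isHermitian_conjTranspose_mul_mul X (hH r')
    rw [conjTranspose_eq_transpose_of_trivial] at h
    rw [show M = rt • (Xᵀ * betheHessian A D r' * X) - κ • 1 by rw [hcompress]; abel]
    exact (h.smul (IsSelfAdjoint.all rt)).sub (isHermitian_one.smul (IsSelfAdjoint.all κ))
  obtain ⟨c, hc0, hc⟩ :=
    (hH r').exists_sortEig_mul_le X ⟨p - 1, by omega⟩ (Nat.sub_lt hp1 Nat.one_pos)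
  have hnorm : (X *ᵥ c) ⬝ᵥ (X *ᵥ c) = c ⬝ᵥ c := by
    simpa [hX] using dotProduct_mulVec_mulVec_eq X 1 c
  have hpos : 0 < c ⬝ᵥ c := by simpa using dotProduct_self_star_pos_iff.mpr hc0
  refine le_of_mul_le_mul_right ?_ hpos
  calc rt * sortEig (hH r') ⟨p - 1, _⟩ * (c ⬝ᵥ c)
      ≤ rt * ((X *ᵥ c) ⬝ᵥ (betheHessian A D r' *ᵥ (X *ᵥ c))) := by
        rw [mul_assoc, ← hnorm]
        exact mul_le_mul_of_nonneg_left hc (by linarith)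
    _ = κ * (c ⬝ᵥ c) + c ⬝ᵥ (M *ᵥ c) := by
        rw [dotProduct_mulVec_mulVec_eq, ← smul_eq_mul, ← dotProduct_smul, ← smul_mulVec,
          hcompress, add_mulVec, smul_mulVec, one_mulVec, dotProduct_add, dotProduct_smul,
          smul_eq_mul]
    _ ≤ (κ + lambdaMax M) * (c ⬝ᵥ c) := by
        linarith [hM.dotProduct_mulVec_le_lambdaMax c]
end

section
/- Let B be the non-backtracking matrix of a finite graph G with adjacency matrix A and degree matrix D. If g ∈ ℝ^{2|E|} satisfies B g = γ g for some γ ∈ ℝ, and g^{in} ∈ ℝ^n is defined by g^{in}_i = Σ_{j ∈ ∂i} g_{ij}, then the Bethe-Hessian at γ annihilates g^{in}: [(γ² − 1)I + D − γA] g^{in} = 0. -/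
open Matrix

/-- if `B g = γ g` and `g^{in}_i = Σ_{j ∈ ∂i} g_{ij}`, then the
Bethe-Hessian at `γ` annihilates `g^{in}`: `[(γ²−1)I + D − γA] g^{in} = 0`. -/
theorem stmt15 {V : Type*} [Fintype V] [DecidableEq V] (G : SimpleGraph V)
    [DecidableRel G.Adj] (γ : ℝ) (g : dirEdge G → ℝ)
    (h : nbMatrix G *ᵥ g = γ • g) :
    ((γ ^ 2 - 1) • (1 : Matrix V V ℝ) + Matrix.diagonal (fun v => (G.degree v : ℝ))
        - γ • G.adjMatrix ℝ) *ᵥ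
      (fun i => ∑ e : dirEdge G, if e.val.1 = i then g e else 0) = 0 := by
  set gin : V → ℝ := fun i => ∑ e : dirEdge G, if e.val.1 = i then g e else 0 with hgin
  have key : ∀ e : dirEdge G,
      γ * g e = gin e.val.2 - g ⟨(e.val.2, e.val.1), e.prop.symm⟩ := by
    intro e
    have h1 := congrFun h e
    simp only [mulVec, dotProduct, nbMatrix, Matrix.of_apply, Pi.smul_apply,
      smul_eq_mul] at h1
    rw [← h1]
    have step : ∀ f : dirEdge G,
        (if e.val.2 = f.val.1 ∧ e.val.1 ≠ f.val.2 then (1:ℝ) else 0) * g f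
        = (if f.val.1 = e.val.2 then g f else 0)
          - (if f = ⟨(e.val.2, e.val.1), e.prop.symm⟩ then g f else 0) := by
      intro f
      by_cases h2 : f.val.1 = e.val.2
      · by_cases h3 : f = ⟨(e.val.2, e.val.1), e.prop.symm⟩
        · subst h3; simp
        · have h4 : e.val.1 ≠ f.val.2 := by
            intro h5
            exact h3 (Subtype.ext (Prod.ext h2 h5.symm))
          rw [if_pos h2, if_neg h3, if_pos ⟨h2.symm, h4⟩, one_mul, sub_zero]
      · have h3 : f ≠ ⟨(e.val.2, e.val.1), e.prop.symm⟩ := by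
          intro h3; apply h2; rw [h3]
        rw [if_neg h2, if_neg h3, if_neg (fun hc : _ ∧ _ => h2 hc.1.symm), zero_mul,
          sub_zero]
    rw [Finset.sum_congr rfl (fun f _ => step f), Finset.sum_sub_distrib,
      Finset.sum_ite_eq' Finset.univ, if_pos (Finset.mem_univ _)]
  have hginv : ∀ v : V, gin v = ∑ e : dirEdge G, (if e.val.1 = v then g e else 0) :=
    fun _ => rfl
  clear_value gin
  funext i
  have hedge : ∀ F : V → V → ℝ,
      ∑ e : dirEdge G, (if e.val.1 = i then F e.val.1 e.val.2 else 0)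
      = ∑ j : V, if G.Adj i j then F i j else 0 := by
    intro F
    rw [← Finset.sum_subtype (p := fun p : V × V => G.Adj p.1 p.2)
        (Finset.univ.filter fun p : V × V => G.Adj p.1 p.2) (by simp)
        (fun p => if p.1 = i then F p.1 p.2 else 0)]
    rw [Finset.sum_filter, Fintype.sum_prod_type]
    rw [Finset.sum_eq_single i]
    · simp
    · intro a _ ha; simp [ha]
    · simp
  have hdeg : (G.degree i : ℝ) = ∑ e : dirEdge G, (if e.val.1 = i then (1:ℝ) else 0) := by
    rw [hedge (fun _ _ => (1:ℝ))]
    simp [SimpleGraph.degree, SimpleGraph.neighborFinset_eq_filter, Finset.sum_ite_mem,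
      Finset.sum_boole]
  simp only [Matrix.sub_mulVec, Matrix.add_mulVec, Matrix.smul_mulVec,
    Matrix.one_mulVec, mulVec_diagonal, Pi.add_apply, Pi.sub_apply, Pi.smul_apply,
    Pi.zero_apply, smul_eq_mul, SimpleGraph.adjMatrix_mulVec_apply]
  have hS : ∑ j ∈ G.neighborFinset i, gin j
      = ∑ e : dirEdge G, (if e.val.1 = i then gin e.val.2 else 0) := by
    rw [hedge (fun _ b => gin b), SimpleGraph.neighborFinset_eq_filter, Finset.sum_filter]
  rw [hS]
  have hterm : ∀ e : dirEdge G,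
      γ * (if e.val.1 = i then gin e.val.2 else 0)
      = (γ ^ 2 - 1) * (if e.val.1 = i then g e else 0)
        + gin i * (if e.val.1 = i then (1:ℝ) else 0) := by
    intro e
    by_cases he : e.val.1 = i
    · simp only [if_pos he, mul_one]
      have k1 := key e
      have k2 : γ * g ⟨(e.val.2, e.val.1), e.prop.symm⟩ = gin i - g e := by
        rw [← he]; exact key ⟨(e.val.2, e.val.1), e.prop.symm⟩
      have h5 : gin e.val.2 = γ * g e + g ⟨(e.val.2, e.val.1), e.prop.symm⟩ := by
        linarith [k1]
      rw [h5, mul_add, k2]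
      ring
    · simp [he]
  have main : γ * ∑ e : dirEdge G, (if e.val.1 = i then gin e.val.2 else 0)
      = (γ ^ 2 - 1) * gin i + (G.degree i : ℝ) * gin i := by
    rw [Finset.mul_sum, Finset.sum_congr rfl (fun e _ => hterm e), Finset.sum_add_distrib,
      ← Finset.mul_sum, ← Finset.mul_sum, ← hdeg, ← hginv i]
    ring
  rw [main]
  ring
end

section
/- The non-backtracking matrix B of a finite graph (edges ≥ 1) has the same eigenvalues, apart possibly from ±1, as the 2n×2n matrix B' = [[A, I − D],[I, 0]]: for every γ ∉ {1, −1}, det(B − γI) = 0 iff det(B' − γI) = 0; more precisely, the Ihara–Bass identity det(B − γI) = (γ²−1)^{|E|−n} · det((γ²−1)I + D − γA) holds, and det(B' − γI) = det(γ²I − γA + D − I) up to sign. -/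
open Matrix

/-- The non-backtracking matrix `B_{(i→j),(k→l)} = δ_{jk} (1 - δ_{il})`, here with
complex entries. -/
def nbMatrixC {V : Type*} [DecidableEq V] (G : SimpleGraph V) :
    Matrix (dirEdge G) (dirEdge G) ℂ :=
  Matrix.of fun e f => if e.val.2 = f.val.1 ∧ e.val.1 ≠ f.val.2 then (1 : ℂ) else 0

/-!
Write `B = Tᵀ S - J`, where `S` and `T` are the vertex–directed-edge incidence matrices of
sources and targets and `J` is the permutation matrix of edge reversal. Then `S Tᵀ = A`,
`T Tᵀ = D`, `S J = T` and `J² = 1`. Pairing each directed edge with its reverse turns `γ + J`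
into the block matrix `[[γ, 1], [1, γ]]`, so `det (γ + J) = (γ² - 1)^|E|`, and for `γ² ≠ 1`
its inverse is `(γ - J) / (γ² - 1)`. Factoring `γ + J` out of `γ - B` and applying
`det (1 - X Y) = det (1 - Y X)` moves the determinant from directed edges to vertices:
`det (B - γ) = (γ² - 1)^|E| det (1 - (γ A - D) / (γ² - 1))`.
At `γ = ±1` both sides of the polynomial form vanish since `n, |E| ≥ 1`.
`B'` linearizes the quadratic pencil `γ² - γ A + D - 1`, because
`det [[X, Y], [1, W]] = det (X W - Y)` for all square blocks.
-/

theorem Matrix.det_fromBlocks_one₂₁ {n R : Type*} [Fintype n] [DecidableEq n] [CommRing R]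
    (A B D : Matrix n n R) : (fromBlocks A B 1 D).det = (A * D - B).det := by
  have hfactor : fromBlocks A B 1 D =
      fromBlocks 1 (A * D + A - B) 0 1 * fromBlocks (B - A * D) 0 1 (-1) *
        fromBlocks 1 (D + 1) 0 1 := by
    simp only [fromBlocks_multiply, Matrix.mul_one, Matrix.one_mul, Matrix.mul_zero,
      Matrix.zero_mul, Matrix.mul_neg, Matrix.mul_add, add_zero, zero_add]
    congr 1
    · abel
    · noncomm_ring
    · rw [add_neg_cancel_right]
  rw [hfactor, det_mul, det_mul, det_fromBlocks_zero₂₁, det_fromBlocks_zero₂₁,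
    det_fromBlocks_zero₁₂, det_neg, ← neg_sub, det_neg]
  simp only [det_one, one_mul, mul_one]
  rw [mul_right_comm, ← pow_add, Even.neg_one_pow ⟨_, rfl⟩, one_mul]

theorem Matrix.det_fromBlocks_one_zero_sub_smul {n R : Type*} [Fintype n] [DecidableEq n]
    [CommRing R] (A B : Matrix n n R) (γ : R) :
    (fromBlocks A B (1 : Matrix n n R) 0 - γ • 1).det = (γ ^ 2 • 1 - γ • A - B).det := by
  have hblocks : fromBlocks A B (1 : Matrix n n R) 0 - γ • 1 =
      fromBlocks (A - γ • 1) B 1 (-(γ • 1)) := by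
    rw [← fromBlocks_one, fromBlocks_smul, sub_eq_add_neg, fromBlocks_neg, fromBlocks_add]
    simp [sub_eq_add_neg]
  rw [hblocks, det_fromBlocks_one₂₁, Matrix.mul_neg, Matrix.mul_smul, Matrix.mul_one, smul_sub,
    smul_smul, ← sq, neg_sub]

namespace dirEdge

variable {V : Type*} {G : SimpleGraph V}

def reverse (e : dirEdge G) : dirEdge G := ⟨e.val.swap, e.prop.symm⟩

lemma reverse_involutive : Function.Involutive (reverse (G := G)) := fun _ => rfl

variable (G) in
def reversePerm : Equiv.Perm (dirEdge G) := reverse_involutive.toPerm _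

end dirEdge

namespace SimpleGraph

variable {V : Type*} (G : SimpleGraph V)

section Incidence

variable [DecidableEq V] (R : Type*) [Semiring R]

def sourceMatrix : Matrix V (dirEdge G) R := of fun v e => if e.val.1 = v then 1 else 0

def targetMatrix : Matrix V (dirEdge G) R := of fun v e => if e.val.2 = v then 1 else 0

def reverseMatrix : Matrix (dirEdge G) (dirEdge G) R := (dirEdge.reversePerm G).permMatrix R

lemma reverseMatrix_apply (e f : dirEdge G) :
    G.reverseMatrix R e f = if e.reverse = f then 1 else 0 := by
  simp [reverseMatrix, PEquiv.toMatrix_apply, dirEdge.reversePerm]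

variable [Fintype V]

lemma reverseMatrix_mul_self : G.reverseMatrix R * G.reverseMatrix R = 1 := by
  have hσ : dirEdge.reversePerm G * dirEdge.reversePerm G = 1 := Equiv.ext fun _ => rfl
  rw [reverseMatrix, ← permMatrix_mul, hσ, permMatrix_one]

lemma sourceMatrix_mul_reverseMatrix :
    G.sourceMatrix R * G.reverseMatrix R = G.targetMatrix R := by
  rw [reverseMatrix, PEquiv.mul_toMatrix_toPEquiv]
  ext v e
  simp [sourceMatrix, targetMatrix, dirEdge.reversePerm, dirEdge.reverse]

lemma transpose_targetMatrix_mul_sourceMatrix :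
    (G.targetMatrix R)ᵀ * G.sourceMatrix R =
      of fun e f => if e.val.2 = f.val.1 then 1 else 0 := by
  ext e f
  rw [mul_apply, Fintype.sum_eq_single e.val.2 fun v hv => by simp [targetMatrix, Ne.symm hv]]
  simp [targetMatrix, sourceMatrix, eq_comm]

end Incidence

variable [Fintype V]

section Adjacency

variable [DecidableRel G.Adj]

variable {G} in
lemma sum_dirEdge {M : Type*} [AddCommMonoid M] (g : V × V → M) :
    ∑ e : dirEdge G, g e.val = ∑ x : V × V, if G.Adj x.1 x.2 then g x else 0 := by
  rw [← Finset.sum_filter]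
  exact (Finset.sum_subtype _ (by simp) g).symm

lemma card_dirEdge : Fintype.card (dirEdge G) = 2 * G.edgeFinset.card := by
  rw [← dart_card_eq_twice_card_edges]
  exact Fintype.card_congr ⟨fun e => ⟨e.val, e.prop⟩, fun d => ⟨d.toProd, d.adj⟩,
    fun _ => rfl, fun _ => rfl⟩

variable [DecidableEq V] (R : Type*) [Semiring R]

lemma sourceMatrix_mul_transpose_targetMatrix :
    G.sourceMatrix R * (G.targetMatrix R)ᵀ = G.adjMatrix R := by
  ext v w
  have hentry (e : dirEdge G) : G.sourceMatrix R v e * (G.targetMatrix R)ᵀ e w =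
      if e.val = (v, w) then 1 else 0 := by
    simp [sourceMatrix, targetMatrix, Prod.ext_iff, ← ite_and, and_comm]
  rw [mul_apply, Finset.sum_congr rfl fun e _ => hentry e,
    sum_dirEdge fun x => if x = (v, w) then (1 : R) else 0,
    Fintype.sum_eq_single (v, w) fun x hx => by simp [hx]]
  simp

lemma targetMatrix_mul_transpose_targetMatrix :
    G.targetMatrix R * (G.targetMatrix R)ᵀ = G.degMatrix R := by
  ext v w
  rw [mul_apply, degMatrix, diagonal_apply]
  split_ifs with hvw
  · subst hvw
    have hentry (e : dirEdge G) : G.targetMatrix R v e * (G.targetMatrix R)ᵀ e v =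
        if e.val.2 = v then 1 else 0 := by
      by_cases h : e.val.2 = v <;> simp [targetMatrix, h]
    rw [Finset.sum_congr rfl fun e _ => hentry e,
      sum_dirEdge fun x => if x.2 = v then (1 : R) else 0, Fintype.sum_prod_type,
      Finset.sum_congr rfl fun a _ => Fintype.sum_eq_single v fun b hb => by simp [hb]]
    simp [← card_neighborFinset_eq_degree, neighborFinset_eq_filter, adj_comm]
  · refine Finset.sum_eq_zero fun e _ => ?_
    by_cases h : e.val.2 = v <;> simp [targetMatrix, h, hvw]

end Adjacency

abbrev AscEdge : Type _ :=
  {e : dirEdge G // Fintype.equivFin V e.val.1 < Fintype.equivFin V e.val.2}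

variable {G} in
lemma AscEdge.ne_reverse (p q : G.AscEdge) : p.val ≠ q.val.reverse := fun h =>
  (p.prop.trans (h ▸ q.prop)).false

variable {G} in
lemma AscEdge.reverse_ne (p q : G.AscEdge) : p.val.reverse ≠ q.val :=
  (q.ne_reverse p).symm

noncomputable def ascEdgeSumEquiv : G.AscEdge ⊕ G.AscEdge ≃ dirEdge G :=
  Equiv.ofBijective (Sum.elim Subtype.val fun p => p.val.reverse) <| by
    constructor
    · rintro (p | p) (q | q) h
      · exact congrArg Sum.inl (Subtype.ext h)
      · exact absurd h (p.ne_reverse q)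
      · exact absurd h (p.reverse_ne q)
      · exact congrArg Sum.inr (Subtype.ext (dirEdge.reverse_involutive.injective h))
    · intro e
      have hne : Fintype.equivFin V e.val.1 ≠ Fintype.equivFin V e.val.2 :=
        (Fintype.equivFin V).injective.ne e.prop.ne
      rcases hne.lt_or_gt with h | h
      · exact ⟨Sum.inl ⟨e, h⟩, rfl⟩
      · exact ⟨Sum.inr ⟨e.reverse, h⟩, rfl⟩

@[simp] lemma ascEdgeSumEquiv_inl (p : G.AscEdge) : G.ascEdgeSumEquiv (Sum.inl p) = p.val := rfl

@[simp] lemma ascEdgeSumEquiv_inr (p : G.AscEdge) :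
    G.ascEdgeSumEquiv (Sum.inr p) = p.val.reverse := rfl

lemma card_ascEdge [DecidableRel G.Adj] : Fintype.card G.AscEdge = G.edgeFinset.card := by
  have h := Fintype.card_congr G.ascEdgeSumEquiv
  rw [Fintype.card_sum, card_dirEdge] at h
  omega

variable [DecidableEq V]

lemma submatrix_smul_one_add_reverseMatrix {R : Type*} [Semiring R] (γ : R) :
    (γ • 1 + G.reverseMatrix R).submatrix G.ascEdgeSumEquiv G.ascEdgeSumEquiv =
      fromBlocks (γ • 1) 1 1 (γ • 1) := by
  ext (p | p) (q | q) <;>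
    simp [reverseMatrix_apply, one_apply, AscEdge.ne_reverse, AscEdge.reverse_ne,
      dirEdge.reverse_involutive.injective.eq_iff, dirEdge.reverse_involutive _,
      Subtype.val_inj]

lemma smul_one_add_reverseMatrix_mul_smul_one_sub {R : Type*} [CommRing R] (γ : R) :
    (γ • 1 + G.reverseMatrix R) * (γ • 1 - G.reverseMatrix R) = (γ ^ 2 - 1) • 1 := by
  rw [Matrix.add_mul, Matrix.mul_sub, Matrix.mul_sub, reverseMatrix_mul_self]
  simp only [Matrix.smul_mul, Matrix.mul_smul, Matrix.one_mul, Matrix.mul_one, smul_smul]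
  rw [sub_smul, one_smul, sq]
  abel

lemma det_smul_one_add_reverseMatrix [DecidableRel G.Adj] {R : Type*} [CommRing R] (γ : R) :
    (γ • 1 + G.reverseMatrix R).det = (γ ^ 2 - 1) ^ G.edgeFinset.card := by
  have hblock : γ • 1 * γ • 1 - 1 = (γ ^ 2 - 1) • (1 : Matrix G.AscEdge G.AscEdge R) := by
    rw [smul_mul_smul_comm, Matrix.mul_one, sub_smul, one_smul, sq]
  rw [← det_submatrix_equiv_self G.ascEdgeSumEquiv, submatrix_smul_one_add_reverseMatrix,
    det_fromBlocks_one₂₁, hblock, det_smul, det_one, mul_one, card_ascEdge]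

lemma nbMatrixC_eq :
    nbMatrixC G = (G.targetMatrix ℂ)ᵀ * G.sourceMatrix ℂ - G.reverseMatrix ℂ := by
  rw [transpose_targetMatrix_mul_sourceMatrix]
  ext e f
  by_cases hrev : e.reverse = f
  · subst hrev
    simp [nbMatrixC, reverseMatrix_apply, dirEdge.reverse]
  · have : e.val.2 = f.val.1 → e.val.1 ≠ f.val.2 := fun h1 h2 =>
      hrev (Subtype.ext (Prod.ext h1 h2))
    by_cases h1 : e.val.2 = f.val.1 <;> simp [nbMatrixC, reverseMatrix_apply, hrev, h1, this]

theorem ihara_bass [DecidableRel G.Adj] (γ : ℂ) (hγ : γ ^ 2 ≠ 1) :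
    (γ ^ 2 - 1) ^ Fintype.card V * (nbMatrixC G - γ • 1).det =
      (γ ^ 2 - 1) ^ G.edgeFinset.card *
        ((γ ^ 2 - 1) • 1 + G.degMatrix ℂ - γ • G.adjMatrix ℂ).det := by
  set c := γ ^ 2 - 1
  have hc : c ≠ 0 := sub_ne_zero.mpr hγ
  set L := c⁻¹ • (γ • 1 - G.reverseMatrix ℂ)
  have hKL : (γ • 1 + G.reverseMatrix ℂ) * L = 1 := by
    rw [Matrix.mul_smul, smul_one_add_reverseMatrix_mul_smul_one_sub, smul_smul,
      inv_mul_cancel₀ hc, one_smul]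
  have hfactor : nbMatrixC G - γ • 1 = -((γ • 1 + G.reverseMatrix ℂ) *
      (1 - L * (G.targetMatrix ℂ)ᵀ * G.sourceMatrix ℂ)) := by
    rw [Matrix.mul_sub, Matrix.mul_one, Matrix.mul_assoc, ← Matrix.mul_assoc _ L, hKL,
      Matrix.one_mul, nbMatrixC_eq]
    abel
  have hvertex : G.sourceMatrix ℂ * (L * (G.targetMatrix ℂ)ᵀ) =
      c⁻¹ • (γ • G.adjMatrix ℂ - G.degMatrix ℂ) := by
    simp only [L, Matrix.smul_mul, Matrix.mul_smul, Matrix.sub_mul, Matrix.mul_sub,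
      Matrix.one_mul, ← Matrix.mul_assoc, sourceMatrix_mul_reverseMatrix,
      sourceMatrix_mul_transpose_targetMatrix, targetMatrix_mul_transpose_targetMatrix]
  have hscale : c • (1 - c⁻¹ • (γ • G.adjMatrix ℂ - G.degMatrix ℂ)) =
      c • 1 + G.degMatrix ℂ - γ • G.adjMatrix ℂ := by
    rw [smul_sub, smul_smul, mul_inv_cancel₀ hc, one_smul]
    abel
  rw [hfactor, det_neg, card_dirEdge, pow_mul, neg_one_sq, one_pow, one_mul, det_mul,
    det_smul_one_add_reverseMatrix, det_one_sub_mul_comm, hvertex, ← hscale, det_smul]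
  ring

end SimpleGraph

/-- the Ihara–Bass identity
`det(B − γI) = (γ²−1)^{|E|−n} det((γ²−1)I + D − γA)` (stated in the equivalent
polynomial form, multiplied by `(γ²−1)^n`), the block-determinant identity
`det(B' − γI) = det(γ²I − γA + D − I)` for `B' = [[A, I−D],[I, 0]]`, and the
resulting equivalence of eigenvalues of `B` and `B'` away from `±1`. -/
theorem stmt16 {V : Type*} [Fintype V] [DecidableEq V] (G : SimpleGraph V)
    [DecidableRel G.Adj] (hE : 1 ≤ G.edgeFinset.card) :
    (∀ γ : ℂ, (γ ^ 2 - 1) ^ (Fintype.card V) * (nbMatrixC G - γ • 1).det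
        = (γ ^ 2 - 1) ^ (G.edgeFinset.card) *
          ((γ ^ 2 - 1) • (1 : Matrix V V ℂ) +
            Matrix.diagonal (fun v => (G.degree v : ℂ)) - γ • G.adjMatrix ℂ).det) ∧
    (∀ γ : ℂ,
      (Matrix.fromBlocks (G.adjMatrix ℂ)
          (1 - Matrix.diagonal (fun v => (G.degree v : ℂ))) 1 0 - γ • 1).det
        = (γ ^ 2 • (1 : Matrix V V ℂ) - γ • G.adjMatrix ℂ +
            Matrix.diagonal (fun v => (G.degree v : ℂ)) - 1).det) ∧
    (∀ γ : ℂ, γ ≠ 1 → γ ≠ -1 →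
      ((nbMatrixC G - γ • 1).det = 0 ↔
        (Matrix.fromBlocks (G.adjMatrix ℂ)
          (1 - Matrix.diagonal (fun v => (G.degree v : ℂ))) 1 0 - γ • 1).det = 0)) := by
  rw [show Matrix.diagonal (fun v => (G.degree v : ℂ)) = G.degMatrix ℂ from rfl]
  have h_ihara (γ : ℂ) : (γ ^ 2 - 1) ^ Fintype.card V * (nbMatrixC G - γ • 1).det =
      (γ ^ 2 - 1) ^ G.edgeFinset.card *
        ((γ ^ 2 - 1) • 1 + G.degMatrix ℂ - γ • G.adjMatrix ℂ).det := by
    by_cases hγ : γ ^ 2 = 1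
    · obtain ⟨e, -⟩ := Finset.card_pos.mp hE
      have : Nonempty V := e.inductionOn fun v _ => ⟨v⟩
      rw [hγ, sub_self, zero_pow Fintype.card_ne_zero, zero_pow (by omega), zero_mul, zero_mul]
    · exact G.ihara_bass γ hγ
  have h_companion (γ : ℂ) :
      (fromBlocks (G.adjMatrix ℂ) (1 - G.degMatrix ℂ) 1 0 - γ • 1).det =
        ((γ ^ 2 - 1) • 1 + G.degMatrix ℂ - γ • G.adjMatrix ℂ).det := by
    rw [det_fromBlocks_one_zero_sub_smul, sub_smul, one_smul]
    congr 1
    abel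
  refine ⟨h_ihara, fun γ => ?_, fun γ h1 h2 => ?_⟩
  · rw [h_companion, sub_smul, one_smul]
    congr 1
    abel
  · have hc : γ ^ 2 - 1 ≠ 0 := sub_ne_zero.mpr (by simp [sq_eq_one_iff, h1, h2])
    rw [h_companion, ← mul_eq_zero_iff_left (pow_ne_zero (Fintype.card V) hc), h_ihara,
      mul_eq_zero_iff_left (pow_ne_zero _ hc)]
end
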